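/- Let d ≥ 2 and let f be a binary string of length d−1 with ν(f) ≥ 2. Then the generalized Fibonacci cube Q_d(f) has exactly d·2^{d−1} − (4d − 2) edges. -/

import Mathlib

/-- Two binary strings differ in exactly one position. -/
def cubeRel (v w : List Bool) : Prop :=
  (List.zipWith (fun a b => a != b) v w).count true = 1

/-- The generalized Fibonacci cube `Q_d(f)`: the subgraph of the `d`-cube induced on
binary strings of length `d` not containing `f` as a consecutive substring. -/
def genFib (d : ℕ) (f : List Bool) :
    SimpleGraph {w : List Bool // w.length = d ∧ ¬ f <:+: w} :=
  SimpleGraph.fromRel fun v w => cubeRel v.1 w.1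

/-- Hamming distance between binary strings (of equal length). -/
def hDist (v w : List Bool) : ℕ :=
  (List.zipWith (fun a b => a != b) v w).count true

/-- One less than the number of blocks of `f`: the number of indices `i ≥ 2`
with `f_{i-1} ≠ f_i`. -/
def nu (f : List Bool) : ℕ :=
  (List.zipWith (fun a b => a != b) f f.tail).count true


open Finset

/-!
Since `f` has length `d - 1`, a string of length `d` contains `f` exactly when it is one of
`f0`, `f1`, `0f`, `1f`; for `ν(f) ≥ 1` these are four distinct strings. Deleting a set `B` of
vertices from the `d`-regular cube removes `d·|B| - e(B)` edges, where `e(B)` counts the edges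
inside `B`. The Hamming distance from `fb` to `cf` is at least `ν(f)`, since it counts the
block boundaries of `cfb`; so for `ν(f) ≥ 2` the only edges inside `B` are `f0 f1` and `0f 1f`,
and `Q_d(f)` has `d·2^(d-1) - (4d - 2)` edges.
-/

lemma hDist_nil_left (w : List Bool) : hDist [] w = 0 := by simp [hDist]

lemma hDist_nil_right (v : List Bool) : hDist v [] = 0 := by cases v <;> simp [hDist]

lemma hDist_cons (a b : Bool) (v w : List Bool) :
    hDist (a :: v) (b :: w) = (if a = b then 0 else 1) + hDist v w := by
  cases a <;> cases b <;> simp [hDist] <;> omega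

@[simp]
lemma hDist_self (v : List Bool) : hDist v v = 0 := by
  induction v with
  | nil => simp [hDist]
  | cons a v ih => simp [hDist_cons, ih]

lemma hDist_comm (v w : List Bool) : hDist v w = hDist w v := by
  induction v generalizing w with
  | nil => rw [hDist_nil_left, hDist_nil_right]
  | cons a v ih =>
    cases w with
    | nil => rw [hDist_nil_left, hDist_nil_right]
    | cons b w => simp only [hDist_cons, ih, eq_comm]

lemma hDist_eq_zero_iff {v w : List Bool} (h : v.length = w.length) :
    hDist v w = 0 ↔ v = w := by
  induction v generalizing w with
  | nil => cases w <;> simp_all [hDist]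
  | cons a v ih =>
    cases w with
    | nil => simp at h
    | cons b w =>
      rw [List.length_cons, List.length_cons, Nat.add_right_cancel_iff] at h
      by_cases hab : a = b <;> simp [hDist_cons, hab, ih h]

lemma hDist_append {u v : List Bool} (h : u.length = v.length) (u' v' : List Bool) :
    hDist (u ++ u') (v ++ v') = hDist u v + hDist u' v' := by
  induction u generalizing v with
  | nil => cases v <;> simp_all [hDist]
  | cons a u ih =>
    cases v with
    | nil => simp at h
    | cons b v =>
      rw [List.length_cons, List.length_cons, Nat.add_right_cancel_iff] at h
      simp only [List.cons_append, hDist_cons, ih h, Nat.add_assoc]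

def allLists : ℕ → Finset (List Bool)
  | 0 => {[]}
  | n + 1 => (allLists n).image (List.cons false) ∪ (allLists n).image (List.cons true)

lemma mem_allLists {n : ℕ} {w : List Bool} : w ∈ allLists n ↔ w.length = n := by
  induction n generalizing w with
  | zero => cases w <;> simp [allLists]
  | succ n ih =>
    cases w with
    | nil => simp [allLists]
    | cons a w => cases a <;> simp [allLists, ih]

lemma disjoint_image_cons_false_true (s t : Finset (List Bool)) :
    Disjoint (s.image (List.cons false)) (t.image (List.cons true)) := by
  simp [disjoint_left]

lemma card_allLists (n : ℕ) : #(allLists n) = 2 ^ n := by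
  induction n with
  | zero => rfl
  | succ n ih =>
    rw [allLists, card_union_of_disjoint (disjoint_image_cons_false_true _ _),
      card_image_of_injective _ List.cons_injective,
      card_image_of_injective _ List.cons_injective, ih, pow_succ]
    ring

def cubeNeighbors (S : Finset (List Bool)) (v : List Bool) : Finset (List Bool) :=
  S.bipartiteAbove (fun v w => hDist v w = 1) v

lemma cubeNeighbors_union (S T : Finset (List Bool)) (v : List Bool) :
    cubeNeighbors (S ∪ T) v = cubeNeighbors S v ∪ cubeNeighbors T v :=
  filter_union _ _ _

lemma disjoint_cubeNeighbors {S T : Finset (List Bool)} (h : Disjoint S T) (v : List Bool) :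
    Disjoint (cubeNeighbors S v) (cubeNeighbors T v) :=
  disjoint_filter_filter h

lemma filter_hDist_eq_zero_allLists (v : List Bool) :
    (allLists v.length).filter (fun w => hDist v w = 0) = {v} := by
  ext w
  simp only [mem_filter, mem_allLists, mem_singleton]
  constructor
  · rintro ⟨hl, h0⟩
    exact ((hDist_eq_zero_iff hl.symm).mp h0).symm
  · rintro rfl
    exact ⟨rfl, hDist_self _⟩

lemma card_cubeNeighbors_allLists (v : List Bool) :
    #(cubeNeighbors (allLists v.length) v) = v.length := by
  induction v with
  | nil => rfl
  | cons a v ih =>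
    have card_image_cons (b : Bool) :
        #(cubeNeighbors ((allLists v.length).image (List.cons b)) (a :: v)) =
          if a = b then v.length else 1 := by
      rw [cubeNeighbors, bipartiteAbove, filter_image,
        card_image_of_injective _ List.cons_injective]
      by_cases hab : a = b
      · simpa [hab, hDist_cons, cubeNeighbors, bipartiteAbove] using ih
      · have hone (w : List Bool) : (1 + hDist v w = 1) = (hDist v w = 0) := by simp
        simp only [hDist_cons, hab, if_false, hone, filter_hDist_eq_zero_allLists,
          card_singleton]
    rw [List.length_cons, allLists, cubeNeighbors_union,
      card_union_of_disjoint (disjoint_cubeNeighbors (disjoint_image_cons_false_true _ _) _),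
      card_image_cons, card_image_cons]
    cases a <;> simp [Nat.add_comm]

/-- Every vertex of the cube has `d` neighbours, and the edges between `B` and its complement
are counted once from each side. -/
lemma sum_card_cubeNeighbors_sdiff {d : ℕ} {B : Finset (List Bool)} (hB : B ⊆ allLists d) :
    ∑ v ∈ allLists d \ B, #(cubeNeighbors (allLists d \ B) v) + d * #B =
      d * #(allLists d \ B) + ∑ u ∈ B, #(cubeNeighbors B u) := by
  set S := allLists d \ B
  have split (v : List Bool) (hv : v.length = d) :
      #(cubeNeighbors S v) + #(cubeNeighbors B v) = d := by
    rw [← card_union_of_disjoint (disjoint_cubeNeighbors sdiff_disjoint v),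
      ← cubeNeighbors_union, sdiff_union_of_subset hB, ← hv]
    exact card_cubeNeighbors_allLists v
  have sum_split (T : Finset (List Bool)) (hT : T ⊆ allLists d) :
      ∑ v ∈ T, #(cubeNeighbors S v) + ∑ v ∈ T, #(cubeNeighbors B v) = d * #T := by
    rw [← sum_add_distrib, sum_congr rfl fun v hv => split v (mem_allLists.mp (hT hv)),
      sum_const, smul_eq_mul, mul_comm]
  have double_count : ∑ v ∈ S, #(cubeNeighbors B v) = ∑ u ∈ B, #(cubeNeighbors S u) := by
    simp only [cubeNeighbors]
    rw [sum_card_bipartiteAbove_eq_sum_card_bipartiteBelow]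
    simp only [bipartiteBelow, bipartiteAbove, hDist_comm]
  have hS := sum_split S sdiff_subset
  have hB' := sum_split B hB
  omega

lemma nu_cons_cons (a b : Bool) (l : List Bool) :
    nu (a :: b :: l) = (if a = b then 0 else 1) + nu (b :: l) := by
  cases a <;> cases b <;> simp [nu] <;> omega

lemma nu_le_nu_cons (c : Bool) (f : List Bool) : nu f ≤ nu (c :: f) := by
  cases f with
  | nil => exact Nat.zero_le _
  | cons a f => rw [nu_cons_cons]; omega

lemma nu_cons_le_hDist_append_cons (b c : Bool) (f : List Bool) :
    nu (c :: f) ≤ hDist (f ++ [b]) (c :: f) := by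
  induction f generalizing c with
  | nil => exact Nat.zero_le _
  | cons a f ih =>
    simp only [nu_cons_cons, List.cons_append, hDist_cons, @eq_comm _ c a]
    exact Nat.add_le_add_left (ih a) _

lemma nu_le_hDist_append_cons (b c : Bool) (f : List Bool) :
    nu f ≤ hDist (f ++ [b]) (c :: f) :=
  (nu_le_nu_cons c f).trans (nu_cons_le_hDist_append_cons b c f)

lemma append_singleton_ne_cons {f : List Bool} (hnu : 0 < nu f) (b c : Bool) :
    f ++ [b] ≠ c :: f := by
  intro h
  have := nu_le_hDist_append_cons b c f
  rw [h, hDist_self] at this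
  omega

def oneBitExtensions (f : List Bool) : Finset (List Bool) :=
  {f ++ [false], f ++ [true], false :: f, true :: f}

lemma infix_iff_mem_oneBitExtensions {f w : List Bool} (hw : w.length = f.length + 1) :
    f <:+: w ↔ w ∈ oneBitExtensions f := by
  simp only [oneBitExtensions, mem_insert, mem_singleton]
  constructor
  · rintro ⟨s, t, rfl⟩
    simp only [List.length_append] at hw
    rcases s with _ | ⟨x, s⟩
    · obtain ⟨b, rfl⟩ := List.length_eq_one_iff.mp (by simpa using hw)
      cases b <;> simp
    · have hst : s.length = 0 ∧ t.length = 0 := by simp at hw; omega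
      obtain ⟨rfl, rfl⟩ := hst.imp List.length_eq_zero_iff.mp List.length_eq_zero_iff.mp
      cases x <;> simp
  · rintro (rfl | rfl | rfl | rfl)
    · exact List.infix_append' [] f [false]
    · exact List.infix_append' [] f [true]
    · exact List.infix_cons (List.infix_refl f)
    · exact List.infix_cons (List.infix_refl f)

lemma oneBitExtensions_subset_allLists (f : List Bool) :
    oneBitExtensions f ⊆ allLists (f.length + 1) := by
  intro w hw
  simp only [oneBitExtensions, mem_insert, mem_singleton] at hw
  rcases hw with rfl | rfl | rfl | rfl <;> simp [mem_allLists]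

lemma filter_not_infix_allLists (f : List Bool) :
    (allLists (f.length + 1)).filter (fun w => ¬ f <:+: w) =
      allLists (f.length + 1) \ oneBitExtensions f := by
  ext w
  simp only [mem_filter, mem_sdiff, and_congr_right_iff]
  intro hw
  rw [infix_iff_mem_oneBitExtensions (mem_allLists.mp hw)]

lemma card_oneBitExtensions {f : List Bool} (hnu : 0 < nu f) : #(oneBitExtensions f) = 4 := by
  have hne := append_singleton_ne_cons hnu
  rw [oneBitExtensions, card_insert_of_notMem, card_insert_of_notMem, card_pair]
  all_goals simp [hne]

lemma sum_card_cubeNeighbors_oneBitExtensions {f : List Bool} (hnu : 2 ≤ nu f) :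
    ∑ u ∈ oneBitExtensions f, #(cubeNeighbors (oneBitExtensions f) u) = 4 := by
  have hne := append_singleton_ne_cons (f := f) (by omega)
  have hfar (b c : Bool) : hDist (f ++ [b]) (c :: f) ≠ 1 := by
    have := nu_le_hDist_append_cons b c f
    omega
  have hfar' (b c : Bool) : hDist (c :: f) (f ++ [b]) ≠ 1 := by
    rw [hDist_comm]; exact hfar b c
  have happ (b b' : Bool) : hDist (f ++ [b]) (f ++ [b']) = if b = b' then 0 else 1 := by
    rw [hDist_append rfl, hDist_self, hDist_cons]; simp [hDist]
  rw [oneBitExtensions, sum_insert, sum_insert, sum_pair]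
  all_goals simp [hne, cubeNeighbors, bipartiteAbove, filter_insert, filter_singleton,
    hDist_cons, hfar, hfar', happ]

lemma genFib_adj_iff {d : ℕ} {f : List Bool}
    (v w : {w : List Bool // w.length = d ∧ ¬ f <:+: w}) :
    (genFib d f).Adj v w ↔ hDist v.1 w.1 = 1 := by
  rw [genFib, SimpleGraph.fromRel_adj]
  refine ⟨fun ⟨_, h⟩ => h.elim id fun h => (hDist_comm _ _).trans h,
    fun h => ⟨?_, .inl h⟩⟩
  rintro rfl
  simp at h

lemma two_mul_ncard_edgeSet_genFib (d : ℕ) (f : List Bool) :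
    2 * (genFib d f).edgeSet.ncard =
      ∑ v ∈ (allLists d).filter (fun w => ¬ f <:+: w),
        #(cubeNeighbors ((allLists d).filter (fun w => ¬ f <:+: w)) v) := by
  set S := (allLists d).filter (fun w => ¬ f <:+: w)
  have hmem (w : List Bool) : w ∈ S ↔ w.length = d ∧ ¬ f <:+: w := by
    rw [mem_filter, mem_allLists]
  let _ : Fintype {w : List Bool // w.length = d ∧ ¬ f <:+: w} := Fintype.subtype S hmem
  classical
  have hdeg (v : {w : List Bool // w.length = d ∧ ¬ f <:+: w}) :
      (genFib d f).degree v = #(cubeNeighbors S v.1) := by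
    rw [← SimpleGraph.card_neighborFinset_eq_degree, SimpleGraph.neighborFinset_eq_filter]
    refine card_bij (fun w _ => w.1) (fun w hw => ?_) (fun _ _ _ _ => Subtype.ext) fun u hu => ?_
    · simp only [mem_filter, mem_univ, true_and, genFib_adj_iff] at hw
      exact mem_filter.mpr ⟨(hmem w.1).mpr w.2, hw⟩
    · obtain ⟨huS, hu⟩ := mem_filter.mp hu
      exact ⟨⟨u, (hmem u).mp huS⟩, by simpa [genFib_adj_iff] using hu, rfl⟩
  rw [Set.ncard_eq_toFinset_card', ← SimpleGraph.edgeFinset,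
    ← SimpleGraph.sum_degrees_eq_twice_card_edges, sum_congr rfl fun v _ => hdeg v]
  exact (sum_subtype S hmem (fun w => #(cubeNeighbors S w))).symm

theorem stmt17_general (d : ℕ) (f : List Bool) (hf : f.length = d - 1)
    (hnu : 2 ≤ nu f) :
    ((genFib d f).edgeSet.ncard : ℤ) = d * 2 ^ (d - 1) - (4 * d - 2) := by
  obtain rfl : d = f.length + 1 := by
    rcases f with _ | _
    · simp [nu] at hnu
    · simp at hf ⊢; omega
  have hedges := two_mul_ncard_edgeSet_genFib (f.length + 1) f
  rw [filter_not_infix_allLists] at hedges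
  have hcount := sum_card_cubeNeighbors_sdiff (oneBitExtensions_subset_allLists f)
  rw [← hedges, card_oneBitExtensions (by omega),
    sum_card_cubeNeighbors_oneBitExtensions hnu] at hcount
  have hcard := card_sdiff_add_card_eq_card (oneBitExtensions_subset_allLists f)
  rw [card_oneBitExtensions (by omega), card_allLists, pow_succ] at hcard
  rw [Nat.add_sub_cancel]
  zify at hcount hcard
  rw [eq_sub_of_add_eq hcard] at hcount
  push_cast
  linarith

theorem stmt17 (d : ℕ) (hd : 2 ≤ d) (f : List Bool) (hf : f.length = d - 1)
    (hnu : 2 ≤ nu f) :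
    ((genFib d f).edgeSet.ncard : ℤ) = d * 2 ^ (d - 1) - (4 * d - 2) :=
  stmt17_general d f hf hnu
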